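/- arXiv:1901.06905 — 3 statements merged into one kernel-verified Lean document; each statement's English description precedes it below -/
import Mathlib

section
/- Let A be an m×n real matrix with orthonormal rows (A Aᵀ = I_m) and let Λ = diag(λ₁,…,λ_n) be a diagonal matrix with positive diagonal entries. Then log det(A Λ Aᵀ) ≥ tr(A (log Λ) Aᵀ), where log Λ = diag(log λ₁,…,log λ_n). -/
/-!
Diagonalize the symmetric matrix `A Λ Aᵀ` by an orthogonal `V`. Replacing `A` by `Vᵀ A` keeps
`A Aᵀ = 1` and changes neither the determinant nor the trace, so we may assume `A Λ Aᵀ` diagonal.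
Its diagonal entries are then `∑ⱼ A i j ^ 2 * λⱼ`, convex combinations of the `λⱼ` because the
rows of `A` are unit vectors, and Jensen's inequality for the concave `log` bounds the log of
each from below by `∑ⱼ A i j ^ 2 * log λⱼ`, the corresponding diagonal entry of `A (log Λ) Aᵀ`.
-/

open Matrix Real

namespace Matrix

variable {ι κ R : Type*} [Fintype κ]

theorem mul_diagonal_mul_transpose_apply_self [CommSemiring R] [DecidableEq κ]
    (A : Matrix ι κ R) (d : κ → R) (i : ι) :
    (A * diagonal d * Aᵀ) i i = ∑ j, A i j ^ 2 * d j := by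
  rw [mul_apply]
  simp only [mul_diagonal, transpose_apply]
  exact Finset.sum_congr rfl fun j _ => by ring

theorem sum_sq_eq_one_of_mul_transpose_eq_one [CommSemiring R] [DecidableEq ι]
    {A : Matrix ι κ R} (hA : A * Aᵀ = 1) (i : ι) : ∑ j, A i j ^ 2 = 1 := by
  classical
  simpa [hA] using (mul_diagonal_mul_transpose_apply_self A (fun _ => 1) i).symm

theorem isSymm_mul_diagonal_mul_transpose [CommSemiring R] [DecidableEq κ]
    (A : Matrix ι κ R) (d : κ → R) : (A * diagonal d * Aᵀ).IsSymm := by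
  simp only [IsSymm, transpose_mul, transpose_transpose, diagonal_transpose, Matrix.mul_assoc]

variable [Fintype ι] [DecidableEq ι]

theorem det_transpose_mul_mul_of_transpose_mul_eq_one [CommRing R] {V : Matrix ι ι R}
    (hV : Vᵀ * V = 1) (M : Matrix ι ι R) : (Vᵀ * M * V).det = M.det := by
  have h := congrArg det hV
  rw [det_mul, det_transpose, det_one] at h
  rw [det_mul, det_mul, det_transpose]
  linear_combination M.det * h

theorem trace_transpose_mul_mul_of_transpose_mul_eq_one [CommRing R] {V : Matrix ι ι R}
    (hV : Vᵀ * V = 1) (M : Matrix ι ι R) : (Vᵀ * M * V).trace = M.trace := by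
  rw [trace_mul_cycle, mul_eq_one_comm.mp hV, one_mul]

theorem IsSymm.exists_transpose_mul_eq_one_isDiag {B : Matrix ι ι ℝ} (hB : B.IsSymm) :
    ∃ V : Matrix ι ι ℝ, Vᵀ * V = 1 ∧ (Vᵀ * B * V).IsDiag := by
  have hB' : B.IsHermitian := by rwa [IsHermitian, conjTranspose_eq_transpose_of_trivial]
  refine ⟨hB'.eigenvectorUnitary, ?_, ?_⟩
  · simpa [star_eq_conjTranspose] using Unitary.coe_star_mul_self hB'.eigenvectorUnitary
  · have h := hB'.conjStarAlgAut_star_eigenvectorUnitary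
    simp only [Unitary.conjStarAlgAut_star_apply, RCLike.ofReal_real_eq_id, Function.id_comp,
      star_eq_conjTranspose, conjTranspose_eq_transpose_of_trivial] at h
    exact h ▸ isDiag_diagonal _

end Matrix

namespace Real

variable {κ : Type*} {s : Finset κ} {w p : κ → ℝ}

theorem sum_mul_pos_of_sum_eq_one (hw : ∀ j ∈ s, 0 ≤ w j) (hw₁ : ∑ j ∈ s, w j = 1)
    (hp : ∀ j ∈ s, 0 < p j) : 0 < ∑ j ∈ s, w j * p j :=
  (convex_Ioi (0 : ℝ)).sum_mem hw hw₁ hp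

theorem sum_mul_log_le_log_sum_mul (hw : ∀ j ∈ s, 0 ≤ w j) (hw₁ : ∑ j ∈ s, w j = 1)
    (hp : ∀ j ∈ s, 0 < p j) : ∑ j ∈ s, w j * log (p j) ≤ log (∑ j ∈ s, w j * p j) :=
  strictConcaveOn_log_Ioi.concaveOn.le_map_sum hw hw₁ hp

end Real

theorem Matrix.trace_mul_diagonal_log_mul_transpose_le_log_det_of_isDiag {ι κ : Type*}
    [Fintype ι] [Fintype κ] [DecidableEq ι] [DecidableEq κ] {A : Matrix ι κ ℝ} {Λ : κ → ℝ}
    (hA : A * Aᵀ = 1) (hΛ : ∀ j, 0 < Λ j) (hdiag : (A * diagonal Λ * Aᵀ).IsDiag) :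
    trace (A * diagonal (fun j => log (Λ j)) * Aᵀ) ≤ log (A * diagonal Λ * Aᵀ).det := by
  have hw := sum_sq_eq_one_of_mul_transpose_eq_one hA
  have hpos (i : ι) : 0 < ∑ j, A i j ^ 2 * Λ j :=
    sum_mul_pos_of_sum_eq_one (fun j _ => sq_nonneg _) (hw i) (fun j _ => hΛ j)
  rw [← hdiag.diagonal_diag, det_diagonal, log_prod fun i _ => by
    rw [diag_apply, mul_diagonal_mul_transpose_apply_self]; exact (hpos i).ne']
  unfold trace
  simp only [diag_apply, mul_diagonal_mul_transpose_apply_self]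
  exact Finset.sum_le_sum fun i _ =>
    sum_mul_log_le_log_sum_mul (fun j _ => sq_nonneg _) (hw i) (fun j _ => hΛ j)

theorem log_det_ge_trace_log {m n : ℕ} (A : Matrix (Fin m) (Fin n) ℝ)
    (Λ : Fin n → ℝ) (hA : A * Aᵀ = 1) (hΛ : ∀ j, 0 < Λ j) :
    Real.log ((A * Matrix.diagonal Λ * Aᵀ).det) ≥
      Matrix.trace (A * Matrix.diagonal (fun j => Real.log (Λ j)) * Aᵀ) := by
  obtain ⟨V, hV, hdiag⟩ :=
    (isSymm_mul_diagonal_mul_transpose A Λ).exists_transpose_mul_eq_one_isDiag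
  have hconj (D : Matrix (Fin n) (Fin n) ℝ) :
      Vᵀ * A * D * (Vᵀ * A)ᵀ = Vᵀ * (A * D * Aᵀ) * V := by
    simp only [transpose_mul, transpose_transpose, Matrix.mul_assoc]
  have hA' : Vᵀ * A * (Vᵀ * A)ᵀ = 1 := by
    simpa [hA, hV] using hconj 1
  rw [ge_iff_le, ← det_transpose_mul_mul_of_transpose_mul_eq_one hV,
    ← trace_transpose_mul_mul_of_transpose_mul_eq_one hV, ← hconj, ← hconj]
  exact trace_mul_diagonal_log_mul_transpose_le_log_det_of_isDiag hA' hΛ (hconj _ ▸ hdiag)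
end

section
/- Let be the 2m×2n real representation of an m×n complex matrix A with orthonormal rows (A A† = I_m), and let Λ be a 2n×2n block-diagonal matrix with 2×2 symmetric positive definite blocks λ_j. Then log det(Â Λ Âᵀ) ≥ tr(Â (log Λ) Âᵀ) = ∑_{i,j} |A_{ij}|² log det λ_j. -/
open Matrix Real Complex Finset

/-- The standard 2×2 real matrix representation of a complex number. -/
noncomputable def chat (a : ℂ) : Matrix (Fin 2) (Fin 2) ℝ :=
  !![a.re, -a.im; a.im, a.re]

/-- Blockwise real representation of a complex matrix. -/
noncomputable def mhat {m n : ℕ} (A : Matrix (Fin m) (Fin n) ℂ) :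
    Matrix (Fin m × Fin 2) (Fin n × Fin 2) ℝ :=
  fun is jt => chat (A is.1 jt.1) is.2 jt.2

/-- The rotation matrix by angle θ. -/
noncomputable def rotMat (θ : ℝ) : Matrix (Fin 2) (Fin 2) ℝ :=
  !![Real.cos θ, -Real.sin θ; Real.sin θ, Real.cos θ]

/-- Block-diagonal matrix with 2×2 blocks, indexed compatibly with `mhat`. -/
noncomputable def blkDiag {n : ℕ} (lam : Fin n → Matrix (Fin 2) (Fin 2) ℝ) :
    Matrix (Fin n × Fin 2) (Fin n × Fin 2) ℝ :=
  fun js kt => if js.1 = kt.1 then lam js.1 js.2 kt.2 else 0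

/-! Conjugating by the block rotation `R = diag (rotMat θⱼ)` turns `Λ` and `log Λ` into diagonal
matrices `Δ` and `log Δ`, and `C = Â R` still has orthonormal rows. In an orthonormal eigenbasis `U`
of `C Δ Cᵀ` the rows of `V = U C` are unit vectors, so each eigenvalue `μₖ = ∑ⱼ Vₖⱼ² δⱼ` is a convex
combination of the diagonal entries `δⱼ` of `Δ`, and concavity of `log` gives
`log μₖ ≥ ∑ⱼ Vₖⱼ² log δⱼ`; summing over `k` gives `log det (C Δ Cᵀ) ≥ tr (C (log Δ) Cᵀ)`.
The trace identity holds because `tr (Â L Âᵀ) = tr (L Âᵀ Â)` and the `(j, j)` block of `Âᵀ Â`, the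
representation of `Aᴴ A`, is `(∑ᵢ |Aᵢⱼ|²) • 1`. -/

lemma Real.sum_mul_log_le_log_sum_mul_s16 {K : Type*} [Fintype K] {w δ : K → ℝ} (hw : ∀ j, 0 ≤ w j)
    (hw₁ : ∑ j, w j = 1) (hδ : ∀ j, 0 < δ j) :
    ∑ j, w j * Real.log (δ j) ≤ Real.log (∑ j, w j * δ j) :=
  strictConcaveOn_log_Ioi.concaveOn.le_map_sum (fun j _ => hw j) hw₁ fun j _ => hδ j

namespace Matrix

lemma mul_diagonal_mul_transpose_apply_self_s16 {N K : Type*} [Fintype K] [DecidableEq K]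
    (V : Matrix N K ℝ) (f : K → ℝ) (k : N) :
    (V * diagonal f * Vᵀ) k k = ∑ j, V k j ^ 2 * f j := by
  rw [mul_apply]
  simp only [mul_diagonal, transpose_apply]
  exact Finset.sum_congr rfl fun j _ => by ring

section OrthonormalRows

variable {N K : Type*} [Fintype N] [Fintype K] [DecidableEq N] [DecidableEq K]

lemma trace_mul_diagonal_log_mul_transpose_le_of_isDiag {V : Matrix N K ℝ} (hV : V * Vᵀ = 1)
    {δ : K → ℝ} (hδ : ∀ j, 0 < δ j) (hdiag : (V * diagonal δ * Vᵀ).IsDiag) :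
    trace (V * diagonal (fun j => Real.log (δ j)) * Vᵀ) ≤ Real.log (V * diagonal δ * Vᵀ).det := by
  have hrow (k : N) : ∑ j, V k j ^ 2 = 1 := by
    simpa [mul_apply, one_apply, sq] using congrFun (congrFun hV k) k
  have hpos (k : N) : 0 < ∑ j, V k j ^ 2 * δ j :=
    (convex_Ioi (0 : ℝ)).sum_mem (fun j _ => sq_nonneg (V k j)) (hrow k) fun j _ => hδ j
  rw [← hdiag.diagonal_diag, det_diagonal, log_prod fun k _ => ?_]
  · simp only [trace, Matrix.diag_apply, mul_diagonal_mul_transpose_apply_self_s16]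
    exact Finset.sum_le_sum fun k _ =>
      Real.sum_mul_log_le_log_sum_mul_s16 (fun j => sq_nonneg (V k j)) (hrow k) hδ
  · simpa only [Matrix.diag_apply, mul_diagonal_mul_transpose_apply_self_s16] using (hpos k).ne'

lemma trace_mul_mul_transpose_of_transpose_mul_eq_one {R : Type*} [CommRing R]
    {U : Matrix N N R} (hU : Uᵀ * U = 1) (X : Matrix N N R) : trace (U * X * Uᵀ) = trace X := by
  rw [trace_mul_cycle, hU, Matrix.one_mul]

lemma det_mul_mul_transpose_of_transpose_mul_eq_one {R : Type*} [CommRing R]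
    {U : Matrix N N R} (hU : Uᵀ * U = 1) (X : Matrix N N R) : (U * X * Uᵀ).det = X.det := by
  have hdetU := congrArg det hU
  rw [det_mul, det_transpose, det_one] at hdetU
  rw [det_mul, det_mul, det_transpose]
  linear_combination X.det * hdetU

lemma exists_mul_mul_transpose_isDiag {M : Matrix N N ℝ} (hM : Mᵀ = M) :
    ∃ U : Matrix N N ℝ, Uᵀ * U = 1 ∧ (U * M * Uᵀ).IsDiag := by
  have hH : M.IsHermitian := by rwa [IsHermitian, conjTranspose_eq_transpose_of_trivial]
  set E : Matrix N N ℝ := ↑hH.eigenvectorUnitary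
  have hstar : star E = Eᵀ := conjTranspose_eq_transpose_of_trivial E
  refine ⟨Eᵀ, ?_, ?_⟩
  · rw [transpose_transpose, ← hstar]
    exact Unitary.mul_star_self_of_mem hH.eigenvectorUnitary.2
  · have h := hH.conjStarAlgAut_star_eigenvectorUnitary
    rw [Unitary.conjStarAlgAut_star_apply] at h
    rw [transpose_transpose, ← hstar, h]
    exact isDiag_diagonal _

theorem trace_mul_diagonal_log_mul_transpose_le_log_det {C : Matrix N K ℝ} (hC : C * Cᵀ = 1)
    {δ : K → ℝ} (hδ : ∀ j, 0 < δ j) :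
    trace (C * diagonal (fun j => Real.log (δ j)) * Cᵀ) ≤ Real.log (C * diagonal δ * Cᵀ).det := by
  obtain ⟨U, hU, hdiag⟩ := exists_mul_mul_transpose_isDiag (M := C * diagonal δ * Cᵀ)
    (by simp only [transpose_mul, transpose_transpose, diagonal_transpose, Matrix.mul_assoc])
  have hconj (X : Matrix K K ℝ) : (U * C) * X * (U * C)ᵀ = U * (C * X * Cᵀ) * Uᵀ := by
    simp only [transpose_mul, Matrix.mul_assoc]
  have hV : (U * C) * (U * C)ᵀ = 1 := by
    rw [transpose_mul, Matrix.mul_assoc, ← Matrix.mul_assoc C, hC, Matrix.one_mul,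
      mul_eq_one_comm.mp hU]
  simpa only [hconj, trace_mul_mul_transpose_of_transpose_mul_eq_one hU,
    det_mul_mul_transpose_of_transpose_mul_eq_one hU] using
    trace_mul_diagonal_log_mul_transpose_le_of_isDiag hV hδ (by rwa [hconj])

lemma trace_mul_diagonal_log_mul_transpose_eq_log_det {Q : Matrix N N ℝ} (hQ : Qᵀ * Q = 1)
    {d : N → ℝ} (hd : ∀ i, 0 < d i) :
    trace (Q * diagonal (fun i => Real.log (d i)) * Qᵀ) = Real.log (Q * diagonal d * Qᵀ).det := by
  rw [trace_mul_mul_transpose_of_transpose_mul_eq_one hQ,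
    det_mul_mul_transpose_of_transpose_mul_eq_one hQ, det_diagonal,
    Real.log_prod fun i _ => (hd i).ne', trace_diagonal]

end OrthonormalRows

section Comp

variable {I J J' K R : Type*}

theorem comp_mul [Fintype J] [Fintype K] [NonUnitalNonAssocSemiring R]
    (M : Matrix I J (Matrix K K R)) (N : Matrix J J' (Matrix K K R)) :
    comp I J' K K R (M * N) = comp I J K K R M * comp J J' K K R N := by
  ext ⟨i, k⟩ ⟨j, l⟩
  simp only [comp_apply, mul_apply, sum_apply, Fintype.sum_prod_type]

theorem trace_comp [Fintype I] [Fintype K] [AddCommMonoid R] (M : Matrix I I (Matrix K K R)) :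
    trace (comp I I K K R M) = ∑ i, trace (M i i) :=
  Fintype.sum_prod_type _

end Comp

end Matrix

lemma chat_eq_leftMulMatrix : chat = Algebra.leftMulMatrix Complex.basisOneI :=
  funext fun a => (Algebra.leftMulMatrix_complex a).symm

lemma chat_conj (a : ℂ) : chat (starRingEnd ℂ a) = (chat a)ᵀ := by
  ext s t
  fin_cases s <;> fin_cases t <;> simp [chat]

lemma chat_ofReal (r : ℝ) : chat r = r • 1 := by
  rw [chat_eq_leftMulMatrix, ← Complex.coe_algebraMap, AlgHom.commutes, Algebra.algebraMap_eq_smul_one]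

section mhat

variable {m n p : ℕ}

lemma mhat_eq_comp (A : Matrix (Fin m) (Fin n) ℂ) : mhat A = comp _ _ _ _ ℝ (A.map chat) := rfl

lemma mhat_mul (A : Matrix (Fin m) (Fin n) ℂ) (B : Matrix (Fin n) (Fin p) ℂ) :
    mhat (A * B) = mhat A * mhat B := by
  simp only [mhat_eq_comp, ← comp_mul]
  congr 1
  rw [chat_eq_leftMulMatrix]
  exact Matrix.map_mul

lemma mhat_one : mhat (1 : Matrix (Fin n) (Fin n) ℂ) = 1 := by
  rw [mhat_eq_comp, chat_eq_leftMulMatrix, Matrix.map_one _ (map_zero _) (map_one _), comp_one]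

lemma mhat_conjTranspose (A : Matrix (Fin m) (Fin n) ℂ) : mhat Aᴴ = (mhat A)ᵀ := by
  ext ⟨j, t⟩ ⟨i, s⟩
  simp [mhat, chat_conj]

lemma mhat_mul_transpose_eq_one {A : Matrix (Fin m) (Fin n) ℂ} (hA : A * Aᴴ = 1) :
    mhat A * (mhat A)ᵀ = 1 := by
  rw [← mhat_conjTranspose, ← mhat_mul, hA, mhat_one]

end mhat

section blkDiag

variable {n : ℕ}

lemma blkDiag_eq_comp (L : Fin n → Matrix (Fin 2) (Fin 2) ℝ) :
    blkDiag L = comp _ _ _ _ ℝ (diagonal L) := by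
  ext ⟨j, s⟩ ⟨k, t⟩
  by_cases h : j = k <;> simp [blkDiag, h]

lemma blkDiag_mul (L L' : Fin n → Matrix (Fin 2) (Fin 2) ℝ) :
    blkDiag (L * L') = blkDiag L * blkDiag L' := by
  simp only [blkDiag_eq_comp, ← comp_mul, diagonal_mul_diagonal]; rfl

lemma blkDiag_transpose (L : Fin n → Matrix (Fin 2) (Fin 2) ℝ) :
    (blkDiag L)ᵀ = blkDiag fun j => (L j)ᵀ := by
  rw [blkDiag_eq_comp, blkDiag_eq_comp, transpose_comp, diagonal_transpose, diagonal_map]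
  exact transpose_zero

lemma blkDiag_one : blkDiag (1 : Fin n → Matrix (Fin 2) (Fin 2) ℝ) = 1 := by
  rw [blkDiag_eq_comp, ← comp_one]; rfl

lemma blkDiag_diagonal (d : Fin n → Fin 2 → ℝ) :
    blkDiag (fun j => diagonal (d j)) = diagonal fun jt => d jt.1 jt.2 := by
  rw [blkDiag_eq_comp, comp_diagonal_diagonal]

end blkDiag

lemma trace_mhat_mul_blkDiag_mul_transpose {m n : ℕ} (A : Matrix (Fin m) (Fin n) ℂ)
    (L : Fin n → Matrix (Fin 2) (Fin 2) ℝ) :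
    trace (mhat A * blkDiag L * (mhat A)ᵀ) = ∑ i, ∑ j, ‖A i j‖ ^ 2 * trace (L j) := by
  have hnorm : ∀ j, (Aᴴ * A) j j = ((∑ i, ‖A i j‖ ^ 2 : ℝ) : ℂ) := fun j => by
    simp [mul_apply, Complex.sq_norm, Complex.normSq_eq_conj_mul_self]
  rw [trace_mul_cycle, ← mhat_conjTranspose, ← mhat_mul, blkDiag_eq_comp, mhat_eq_comp,
    ← comp_mul, trace_comp, Finset.sum_comm]
  refine Finset.sum_congr rfl fun j _ => ?_
  simp only [mul_diagonal, map_apply, hnorm, chat_ofReal, smul_mul, one_mul, trace_smul, smul_eq_mul,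
    Finset.sum_mul]

lemma rotMat_transpose_mul_self (θ : ℝ) : (rotMat θ)ᵀ * rotMat θ = 1 := by
  ext s t
  fin_cases s <;> fin_cases t <;>
    simp [rotMat, mul_apply, Fin.sum_univ_two, ← sq, mul_comm]

theorem complex_log_det_ge_trace {m n : ℕ} (A : Matrix (Fin m) (Fin n) ℂ)
    (hA : A * Aᴴ = 1)
    (θ : Fin n → ℝ) (d : Fin n → Fin 2 → ℝ) (hd : ∀ j s, 0 < d j s)
    (lam : Fin n → Matrix (Fin 2) (Fin 2) ℝ)
    (hlam : ∀ j, lam j = rotMat (θ j) * Matrix.diagonal (d j) * (rotMat (θ j))ᵀ)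
    (loglam : Fin n → Matrix (Fin 2) (Fin 2) ℝ)
    (hloglam : ∀ j, loglam j =
      rotMat (θ j) * Matrix.diagonal (fun s => Real.log (d j s)) * (rotMat (θ j))ᵀ) :
    Real.log ((mhat A * blkDiag lam * (mhat A)ᵀ).det) ≥
        Matrix.trace (mhat A * blkDiag loglam * (mhat A)ᵀ) ∧
      Matrix.trace (mhat A * blkDiag loglam * (mhat A)ᵀ) =
        ∑ i : Fin m, ∑ j : Fin n, ‖A i j‖ ^ 2 * Real.log ((lam j).det) := by
  obtain rfl : lam = _ := funext hlam
  obtain rfl : loglam = _ := funext hloglam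
  set R := blkDiag fun j => rotMat (θ j)
  have hconj (f : Fin n → Fin 2 → ℝ) :
      blkDiag (fun j => rotMat (θ j) * diagonal (f j) * (rotMat (θ j))ᵀ) =
        R * diagonal (fun jt => f jt.1 jt.2) * Rᵀ := by
    rw [← blkDiag_diagonal, blkDiag_transpose, ← blkDiag_mul, ← blkDiag_mul]
    rfl
  have hR : R * Rᵀ = 1 := by
    rw [blkDiag_transpose, ← blkDiag_mul, ← blkDiag_one]
    exact congrArg blkDiag (funext fun j => mul_eq_one_comm.mp (rotMat_transpose_mul_self (θ j)))
  have hC : (mhat A * R) * (mhat A * R)ᵀ = 1 := by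
    rw [transpose_mul, Matrix.mul_assoc, ← Matrix.mul_assoc R, hR, Matrix.one_mul,
      mhat_mul_transpose_eq_one hA]
  refine ⟨?_, ?_⟩
  · rw [hconj, hconj]
    simpa only [transpose_mul, Matrix.mul_assoc] using
      trace_mul_diagonal_log_mul_transpose_le_log_det hC fun jt => hd jt.1 jt.2
  · rw [trace_mhat_mul_blkDiag_mul_transpose]
    simp only [trace_mul_diagonal_log_mul_transpose_eq_log_det (rotMat_transpose_mul_self _) (hd _)]
end

section
/- Let A be an m×n real matrix of block form (I_r 0 ; 0 A_u) with A Aᵀ = I_m, all columns of A_u nonzero, every row of A_u having at least two nonzero entries, and let λ_j > 0 (j = 1,…,n). If equality ∑_i log(∑_j A_{ij}² λ_j) = ∑_i ∑_j A_{ij}² log λ_j holds, then for every j with r < j ≤ n there exists k ≠ j, r < k ≤ n, with λ_j = λ_k. -/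
open Matrix Real Finset

/-!
Each row of `A` has unit norm, so its squared entries are probability weights and Jensen's
inequality for the concave `log` bounds each summand on the right by the one on the left.
Equality of the sums therefore forces equality row by row, and the strict concavity of `log`
makes `Λ` constant on the support of every row. A column `j` outside the identity block has a
nonzero entry in some row `i`, which the block structure puts outside the identity block too; that
row has a second nonzero entry `k`, and for the same reason `k` lies outside the identity block.
-/

theorem Matrix.sum_sq_eq_one_of_mul_transpose_eq_one_s18 {m n R : Type*} [Fintype n] [DecidableEq m]
    [CommSemiring R] {A : Matrix m n R} (hA : A * Aᵀ = 1) (i : m) :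
    ∑ j, A i j ^ 2 = 1 := by
  simpa [Matrix.mul_apply, sq] using congrFun (congrFun hA i) i

theorem Real.sum_mul_log_le_log_sum_mul_s18 {κ : Type*} {s : Finset κ} {w p : κ → ℝ}
    (hw₀ : ∀ j ∈ s, 0 ≤ w j) (hw₁ : ∑ j ∈ s, w j = 1) (hp : ∀ j ∈ s, 0 < p j) :
    ∑ j ∈ s, w j * log (p j) ≤ log (∑ j ∈ s, w j * p j) :=
  strictConcaveOn_log_Ioi.concaveOn.le_map_sum hw₀ hw₁ hp

theorem Real.eq_of_sum_log_sum_mul_eq_sum_sum_mul_log {ι κ : Type*} [Fintype ι] [Fintype κ]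
    {W : ι → κ → ℝ} {p : κ → ℝ} (hW₀ : ∀ i j, 0 ≤ W i j)
    (hW₁ : ∀ i, ∑ j, W i j = 1) (hp : ∀ j, 0 < p j)
    (heq : ∑ i, log (∑ j, W i j * p j) = ∑ i, ∑ j, W i j * log (p j))
    {i : ι} {j k : κ} (hj : W i j ≠ 0) (hk : W i k ≠ 0) : p j = p k := by
  have hrow_le : ∀ i ∈ univ, ∑ j, W i j * log (p j) ≤ log (∑ j, W i j * p j) := fun i _ =>
    sum_mul_log_le_log_sum_mul_s18 (fun j _ => hW₀ i j) (hW₁ i) (fun j _ => hp j)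
  have hrow_eq : log (∑ j, W i j * p j) = ∑ j, W i j * log (p j) :=
    ((sum_eq_sum_iff_of_le hrow_le).mp heq.symm i (mem_univ i)).symm
  exact (strictConcaveOn_log_Ioi.map_sum_eq_iff_of_nonneg (fun j _ => hW₀ i j) (hW₁ i)
    (fun j _ => hp j)).mp hrow_eq (mem_univ j) hj (mem_univ k) hk

theorem le_iff_le_of_apply_ne_zero_of_block {m n r : ℕ} {R : Type*} [Zero R] [One R]
    {A : Matrix (Fin m) (Fin n) R}
    (hblock : ∀ i : Fin m, ∀ j : Fin n, ((i : ℕ) < r ∨ (j : ℕ) < r) →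
      A i j = if (i : ℕ) = (j : ℕ) then 1 else 0)
    {i : Fin m} {j : Fin n} (hij : A i j ≠ 0) : r ≤ (i : ℕ) ↔ r ≤ (j : ℕ) := by
  constructor <;> intro hr <;> by_contra! hlt
  · exact hij (by simpa [show (i : ℕ) ≠ j by omega] using hblock i j (Or.inr hlt))
  · exact hij (by simpa [show (i : ℕ) ≠ j by omega] using hblock i j (Or.inl hlt))

theorem exists_ne_of_exists_ne_pair {α : Type*} {P : α → Prop}
    (h : ∃ a b, a ≠ b ∧ P a ∧ P b) (c : α) : ∃ k, k ≠ c ∧ P k := by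
  obtain ⟨a, b, hab, ha, hb⟩ := h
  by_cases hac : a = c
  · exact ⟨b, hac ▸ hab.symm, hb⟩
  · exact ⟨a, hac, ha⟩

theorem equality_forces_pairing {m n r : ℕ} (A : Matrix (Fin m) (Fin n) ℝ)
    (hA : A * Aᵀ = 1)
    (hblock : ∀ i : Fin m, ∀ j : Fin n, ((i : ℕ) < r ∨ (j : ℕ) < r) →
      A i j = if (i : ℕ) = (j : ℕ) then 1 else 0)
    (hcols : ∀ j : Fin n, r ≤ (j : ℕ) → ∃ i, A i j ≠ 0)
    (hrows : ∀ i : Fin m, r ≤ (i : ℕ) →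
      ∃ j k : Fin n, j ≠ k ∧ A i j ≠ 0 ∧ A i k ≠ 0)
    (Λ : Fin n → ℝ) (hΛ : ∀ j, 0 < Λ j)
    (heq : ∑ i, Real.log (∑ j, (A i j) ^ 2 * Λ j) =
      ∑ i, ∑ j, (A i j) ^ 2 * Real.log (Λ j)) :
    ∀ j : Fin n, r ≤ (j : ℕ) →
      ∃ k : Fin n, k ≠ j ∧ r ≤ (k : ℕ) ∧ Λ j = Λ k := by
  intro j hj
  obtain ⟨i, hij⟩ := hcols j hj
  have hi : r ≤ (i : ℕ) := (le_iff_le_of_apply_ne_zero_of_block hblock hij).mpr hj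
  obtain ⟨k, hkj, hik⟩ := exists_ne_of_exists_ne_pair (hrows i hi) j
  refine ⟨k, hkj, (le_iff_le_of_apply_ne_zero_of_block hblock hik).mp hi, ?_⟩
  exact eq_of_sum_log_sum_mul_eq_sum_sum_mul_log (fun _ _ => sq_nonneg _)
    (sum_sq_eq_one_of_mul_transpose_eq_one_s18 hA) hΛ heq (pow_ne_zero 2 hij) (pow_ne_zero 2 hik)
end
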